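/- arXiv:1912.09560 — 2 statements merged into one kernel-verified Lean document; each statement's English description precedes it below -/
import Mathlib

section
/- Variance of the GLMGA distribution: for all σ, a, b > 0 with σ < 1/4, ∫_0^∞ y² f_{σ,a,b}(y) dy − ( ∫_0^∞ y f_{σ,a,b}(y) dy )² = (2b)^{-2σ} / B(1/2,a)² · [ B(1/2 − 2σ, a + 2σ)·B(1/2, a) − B(1/2 − σ, a + σ)² ]. -/
open MeasureTheory Real Filter Topology

/-- The (real) beta function `B(m,n) = ∫_0^1 t^(m-1) (1-t)^(n-1) dt`. -/
noncomputable def betaFn (m n : ℝ) : ℝ :=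
  ∫ t in (0:ℝ)..1, t ^ (m - 1) * (1 - t) ^ (n - 1)

/-- The regularized incomplete beta function `I_{m,n}(v)`. -/
noncomputable def regIncBeta (m n v : ℝ) : ℝ :=
  (∫ t in (0:ℝ)..v, t ^ (m - 1) * (1 - t) ^ (n - 1)) / betaFn m n

/-- The GLMGA density `f_{σ,a,b}`. -/
noncomputable def glmga (σ a b y : ℝ) : ℝ :=
  (2 * b) ^ a / (σ * betaFn a (1 / 2)) * y ^ (-(1 / (2 * σ) + 1))
    / (y ^ (-1 / σ) + 2 * b) ^ (a + 1 / 2)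


/-!
Substituting `y = x ^ (-σ)` turns the `k`-th moment of the GLMGA density into a constant multiple of
`∫_0^∞ x^(1/2 - kσ - 1) (x + 2b)^(-(a + 1/2)) dx`, and the substitution `x = 2b · s/(1-s)` turns
this into `(2b)^(-(a + kσ)) B(1/2 - kσ, a + kσ)`. The variance is then `m₂ - m₁²` for `k = 2, 1`.
-/

open Set

lemma betaFn_comm (m n : ℝ) : betaFn m n = betaFn n m := by
  have h := intervalIntegral.integral_comp_sub_left
    (fun t : ℝ => t ^ (m - 1) * (1 - t) ^ (n - 1)) (a := 0) (b := 1) 1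
  simp only [sub_sub_cancel, sub_self, sub_zero] at h
  rw [betaFn, betaFn, ← h]
  simp_rw [mul_comm]

lemma hasDerivAt_div_one_sub {s : ℝ} (hs : s ≠ 1) :
    HasDerivAt (fun s : ℝ => s / (1 - s)) ((1 - s) ^ 2)⁻¹ s := by
  have hs' : 1 - s ≠ 0 := sub_ne_zero.mpr hs.symm
  refine ((hasDerivAt_id' s).fun_div ((hasDerivAt_id' s).const_sub 1) hs').congr_deriv ?_
  field_simp
  ring

lemma injOn_div_one_sub : InjOn (fun s : ℝ => s / (1 - s)) (Ioo 0 1) := by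
  intro s hs t ht hst
  have h1 : 1 - s ≠ 0 := by linarith [hs.2]
  have h2 : 1 - t ≠ 0 := by linarith [ht.2]
  field_simp at hst
  linarith

lemma image_div_one_sub_Ioo : (fun s : ℝ => s / (1 - s)) '' Ioo 0 1 = Ioi 0 := by
  ext u
  constructor
  · rintro ⟨s, ⟨hs0, hs1⟩, rfl⟩
    exact div_pos hs0 (by linarith)
  · intro (hu : 0 < u)
    refine ⟨u / (1 + u), ⟨by positivity, (div_lt_one (by positivity)).mpr (by linarith)⟩, ?_⟩
    field_simp
    ring

lemma integral_Ioi_rpow_mul_add_one_rpow (m n : ℝ) :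
    ∫ t in Ioi 0, t ^ (m - 1) * (t + 1) ^ (-(m + n)) = betaFn m n := by
  rw [← image_div_one_sub_Ioo, integral_image_eq_integral_abs_deriv_smul measurableSet_Ioo
    (fun s hs => (hasDerivAt_div_one_sub hs.2.ne).hasDerivWithinAt) injOn_div_one_sub,
    betaFn, intervalIntegral.integral_of_le zero_le_one, integral_Ioc_eq_integral_Ioo]
  refine setIntegral_congr_fun measurableSet_Ioo fun s ⟨hs0, hs1⟩ => ?_
  have h1 : 0 < 1 - s := by linarith
  have hadd : s / (1 - s) + 1 = (1 - s)⁻¹ := by field_simp; ring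
  have hjac : |((1 - s) ^ 2)⁻¹| = (1 - s) ^ (-2 : ℝ) := by
    rw [abs_of_pos (by positivity), rpow_neg h1.le, rpow_two]
  simp only [smul_eq_mul]
  rw [hjac, hadd, div_rpow hs0.le h1.le, inv_rpow h1.le, ← rpow_neg h1.le, neg_neg,
    div_eq_mul_inv, ← rpow_neg h1.le]
  calc (1 - s) ^ (-2 : ℝ) * (s ^ (m - 1) * (1 - s) ^ (-(m - 1)) * (1 - s) ^ (m + n))
      = s ^ (m - 1) * ((1 - s) ^ (-2 : ℝ) * (1 - s) ^ (-(m - 1)) * (1 - s) ^ (m + n)) := by ring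
    _ = s ^ (m - 1) * (1 - s) ^ (n - 1) := by
      rw [← rpow_add h1, ← rpow_add h1]
      ring_nf

lemma integral_Ioi_rpow_mul_add_rpow (m n : ℝ) {c : ℝ} (hc : 0 < c) :
    ∫ x in Ioi 0, x ^ (m - 1) * (x + c) ^ (-(m + n)) = c ^ (-n) * betaFn m n := by
  have hscale := integral_comp_mul_left_Ioi' (fun x : ℝ => x ^ (m - 1) * (x + c) ^ (-(m + n))) 0 hc
  rw [mul_zero] at hscale
  rw [← hscale, ← integral_Ioi_rpow_mul_add_one_rpow, ← integral_const_mul, smul_eq_mul,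
    ← integral_const_mul]
  refine setIntegral_congr_fun measurableSet_Ioi fun x (hx : 0 < x) => ?_
  rw [show c * x + c = c * (x + 1) by ring, mul_rpow hc.le hx.le, mul_rpow hc.le (by positivity)]
  have hpow : c * c ^ (m - 1) * c ^ (-(m + n)) = c ^ (-n) := by
    rw [mul_comm c, ← rpow_add_one hc.ne', ← rpow_add hc]
    ring_nf
  linear_combination (x ^ (m - 1) * (x + 1) ^ (-(m + n))) * hpow

lemma glmga_rpow_neg (σ a b : ℝ) (hσ : 0 < σ) {x : ℝ} (hx : 0 < x) :
    glmga σ a b (x ^ (-σ)) =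
      (2 * b) ^ a / (σ * betaFn a (1 / 2)) * x ^ (1 / 2 + σ) / (x + 2 * b) ^ (a + 1 / 2) := by
  have hexp : (x ^ (-σ)) ^ (-(1 / (2 * σ) + 1)) = x ^ (1 / 2 + σ) := by
    rw [← rpow_mul hx.le]
    congr 1
    field_simp
  have hbase : (x ^ (-σ)) ^ (-1 / σ) = x := by
    rw [← rpow_mul hx.le, show -σ * (-1 / σ) = 1 by field_simp, rpow_one]
  rw [glmga, hexp, hbase]

/-- Holds for every real `k`: both substitutions preserve integrability, so a divergent moment
(integral `0` by convention) is matched by a divergent beta integral (also `0`). -/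
lemma glmga_moment (σ a b k : ℝ) (hσ : 0 < σ) (hb : 0 < b) :
    ∫ y in Ioi 0, y ^ k * glmga σ a b y
      = (2 * b) ^ (-(k * σ)) * betaFn (1 / 2 - k * σ) (a + k * σ) / betaFn a (1 / 2) := by
  have h2b : 0 < 2 * b := by positivity
  rw [← integral_comp_rpow_Ioi _ (neg_ne_zero.mpr hσ.ne')]
  have hintegrand : ∀ x ∈ Ioi (0 : ℝ),
      (|-σ| * x ^ (-σ - 1)) • ((x ^ (-σ)) ^ k * glmga σ a b (x ^ (-σ)))
        = (2 * b) ^ a / betaFn a (1 / 2) *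
          (x ^ ((1 / 2 - k * σ) - 1) * (x + 2 * b) ^ (-((1 / 2 - k * σ) + (a + k * σ)))) := by
    intro x (hx : 0 < x)
    have hexp : x ^ (-σ - 1) * x ^ (-σ * k) * x ^ (1 / 2 + σ) = x ^ ((1 / 2 - k * σ) - 1) := by
      rw [← rpow_add hx, ← rpow_add hx]
      ring_nf
    rw [glmga_rpow_neg σ a b hσ hx, ← rpow_mul hx.le, abs_neg, abs_of_pos hσ, smul_eq_mul,
      show -((1 / 2 - k * σ) + (a + k * σ)) = -(a + 1 / 2) by ring, rpow_neg (by positivity),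
      ← hexp]
    field_simp
  rw [setIntegral_congr_fun measurableSet_Ioi hintegrand, integral_const_mul,
    integral_Ioi_rpow_mul_add_rpow _ _ h2b, div_mul_eq_mul_div, ← mul_assoc,
    ← rpow_add h2b, show a + -(a + k * σ) = -(k * σ) by ring]

theorem glmga_variance_general (σ a b : ℝ) (hσ : 0 < σ) (hb : 0 < b) :
    (∫ y in Set.Ioi (0:ℝ), y ^ 2 * glmga σ a b y) -
        (∫ y in Set.Ioi (0:ℝ), y * glmga σ a b y) ^ 2
      = (2 * b) ^ (-(2 * σ)) / (betaFn (1 / 2) a) ^ 2 *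
        (betaFn (1 / 2 - 2 * σ) (a + 2 * σ) * betaFn (1 / 2) a -
          (betaFn (1 / 2 - σ) (a + σ)) ^ 2) := by
  have hm2 := glmga_moment σ a b 2 hσ hb
  have hm1 := glmga_moment σ a b 1 hσ hb
  simp only [rpow_two, rpow_one, one_mul] at hm2 hm1
  have hsq : ((2 * b) ^ (-σ)) ^ 2 = (2 * b) ^ (-(2 * σ)) := by
    rw [← rpow_natCast, ← rpow_mul (by positivity)]
    ring_nf
  rw [hm2, hm1, betaFn_comm (1 / 2) a, div_pow, mul_pow, hsq]
  rcases eq_or_ne (betaFn a (1 / 2)) 0 with hB | hB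
  · rw [hB]
    simp
  · field_simp

/-- variance of the GLMGA distribution. -/
theorem glmga_variance (σ a b : ℝ) (hσ : 0 < σ) (ha : 0 < a) (hb : 0 < b)
    (hσ4 : σ < 1 / 4) :
    (∫ y in Set.Ioi (0:ℝ), y ^ 2 * glmga σ a b y) -
        (∫ y in Set.Ioi (0:ℝ), y * glmga σ a b y) ^ 2
      = (2 * b) ^ (-(2 * σ)) / (betaFn (1 / 2) a) ^ 2 *
        (betaFn (1 / 2 - 2 * σ) (a + 2 * σ) * betaFn (1 / 2) a -
          (betaFn (1 / 2 - σ) (a + σ)) ^ 2) :=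
  glmga_variance_general σ a b hσ hb
end

section
/- Unimodality and mode of the GLMGA distribution: for all σ > 0, b > 0 and a > σ, the GLMGA density f_{σ,a,b} attains a strict global maximum on (0,∞) at the point y_0 = ( (b + 2bσ)/(a − σ) )^{-σ}; that is, f_{σ,a,b}(y) < f_{σ,a,b}(y_0) for every y > 0 with y ≠ y_0. -/
/-!
Substituting `u = y ^ (-1/σ)` turns the density into a positive constant times
`u ^ p / (u + c) ^ q` with `p = σ + 1/2`, `q = a + 1/2`, `c = 2b`; `0 < p < q` as `σ < a`.
For `m = p c / (q - p)`, Bernoulli's inequality with exponent `p / q < 1` gives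
`(u / m) ^ (p / q) < 1 + (p / q) (u / m - 1) = (u + c) / (m + c)` for `u ≠ m`, which raised to the
power `q` says that `u ^ p / (u + c) ^ q` is strictly maximal at `u = m`. Here
`m = (b + 2bσ) / (a - σ)`, and the mode is `y₀ = m ^ (-σ)`.
-/

open MeasureTheory Real Filter Topology

lemma betaFn_pos {m n : ℝ} (hm : 0 < m) (hn : 0 < n) : 0 < betaFn m n := by
  have hleft :
      IntervalIntegrable (fun t : ℝ => t ^ (m - 1) * (1 - t) ^ (n - 1)) volume 0 (1 / 2) := by
    refine (intervalIntegral.intervalIntegrable_rpow' (by linarith)).mul_continuousOn ?_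
    refine (continuousOn_const.sub continuousOn_id).rpow_const fun t ht => Or.inl ?_
    rw [Set.uIcc_of_le (by norm_num)] at ht
    exact (by linarith [ht.2] : (0 : ℝ) < 1 - t).ne'
  have hright :
      IntervalIntegrable (fun t : ℝ => t ^ (m - 1) * (1 - t) ^ (n - 1)) volume (1 / 2) 1 := by
    have hpow : IntervalIntegrable (fun t : ℝ => t ^ (n - 1)) volume 0 (1 / 2) :=
      intervalIntegral.intervalIntegrable_rpow' (by linarith)
    have h := (hpow.comp_sub_left 1).symm
    rw [show (1 : ℝ) - 1 / 2 = 1 / 2 by norm_num, sub_zero] at h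
    refine h.continuousOn_mul (continuousOn_id.rpow_const fun t ht => Or.inl ?_)
    rw [Set.uIcc_of_le (by norm_num)] at ht
    exact (show (0 : ℝ) < t by linarith [ht.1]).ne'
  refine intervalIntegral.intervalIntegral_pos_of_pos_on (hleft.trans hright)
    (fun t ht => ?_) one_pos
  exact mul_pos (rpow_pos_of_pos ht.1 _) (rpow_pos_of_pos (sub_pos.2 ht.2) _)

theorem rpow_div_add_rpow_lt_of_ne {p q c u : ℝ} (hp : 0 < p) (hpq : p < q) (hc : 0 < c)
    (hu : 0 < u) (hne : u ≠ p * c / (q - p)) :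
    u ^ p / (u + c) ^ q < (p * c / (q - p)) ^ p / (p * c / (q - p) + c) ^ q := by
  set m := p * c / (q - p) with hm
  have hqp : 0 < q - p := sub_pos.2 hpq
  have hm0 : 0 < m := by positivity
  have hq : 0 < q := hp.trans hpq
  clear_value m
  have bernoulli : (u / m) ^ (p / q) < (u + c) / (m + c) := by
    have h := rpow_one_add_lt_one_add_mul_self (s := u / m - 1) (by linarith [div_pos hu hm0])
      (sub_ne_zero.2 fun h => hne ((div_eq_one_iff_eq hm0.ne').1 h)) (div_pos hp hq)
      ((div_lt_one hq).2 hpq)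
    rw [add_sub_cancel] at h
    convert h using 1
    rw [hm]
    field_simp
    ring
  have h := rpow_lt_rpow (by positivity) bernoulli hq
  rw [← rpow_mul (by positivity), div_mul_cancel₀ _ hq.ne', div_rpow hu.le hm0.le,
    div_rpow (by positivity) (by positivity)] at h
  rw [div_lt_div_iff₀ (by positivity) (by positivity)]
  rw [div_lt_div_iff₀ (by positivity) (by positivity)] at h
  linarith

lemma glmga_eq {σ : ℝ} (a b : ℝ) {y : ℝ} (hσ : σ ≠ 0) (hy : 0 < y) :
    glmga σ a b y = (2 * b) ^ a / (σ * betaFn a (1 / 2)) *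
      ((y ^ (-σ)⁻¹) ^ (σ + 1 / 2) / (y ^ (-σ)⁻¹ + 2 * b) ^ (a + 1 / 2)) := by
  have hexp : -(1 / (2 * σ) + 1) = (-σ)⁻¹ * (σ + 1 / 2) := by field_simp; ring
  rw [glmga, ← rpow_mul hy.le, ← hexp, show -1 / σ = (-σ)⁻¹ by field_simp, mul_div_assoc]

/-- unimodality and mode of the GLMGA distribution. -/
theorem glmga_mode (σ a b : ℝ) (hσ : 0 < σ) (hb : 0 < b) (ha : σ < a) :
    ∀ y : ℝ, 0 < y → y ≠ ((b + 2 * b * σ) / (a - σ)) ^ (-σ) →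
      glmga σ a b y < glmga σ a b (((b + 2 * b * σ) / (a - σ)) ^ (-σ)) := by
  intro y hy hne
  set m := (b + 2 * b * σ) / (a - σ)
  have hm : m = (σ + 1 / 2) * (2 * b) / (a + 1 / 2 - (σ + 1 / 2)) := by ring
  have hm0 : 0 < m := div_pos (by positivity) (sub_pos.2 ha)
  have hσ' : -σ ≠ 0 := neg_ne_zero.2 hσ.ne'
  have hu : y ^ (-σ)⁻¹ ≠ m := fun h => hne (by rw [← h, rpow_inv_rpow hy.le hσ'])
  rw [glmga_eq a b hσ.ne' hy, glmga_eq a b hσ.ne' (rpow_pos_of_pos hm0 _),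
    rpow_rpow_inv hm0.le hσ', hm]
  have hK : 0 < (2 * b) ^ a / (σ * betaFn a (1 / 2)) :=
    div_pos (by positivity) (mul_pos hσ (betaFn_pos (hσ.trans ha) one_half_pos))
  exact mul_lt_mul_of_pos_left (rpow_div_add_rpow_lt_of_ne (by positivity) (by linarith)
    (by positivity) (rpow_pos_of_pos hy _) (hm ▸ hu)) hK
end
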